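/- Let G=(V,E) be a general dissimilarity graph and let S* = { e=(u,v)∈E : w(e) > d(u,v) } be the set of edges whose weight exceeds the shortest-path distance between their endpoints. Then: (i) replacing the weight of each edge e=(u,v)∈S* by d(u,v), and leaving all other weights unchanged, yields a general metric graph; and (ii) for any set S⊆E, if the weights of edges in S can be decreased (without changing any weight outside S) so that G becomes a general metric graph, then S*⊆S. Hence S* is the unique minimum-cardinality solution to the decrease-only Generalized Metric Violation Distance problem. -/
import Mathlib


open SimpleGraph

noncomputable section

variable {V : Type*}

/-- The length of a walk: the sum of the weights of its edges. -/
def wlen {G : SimpleGraph V} (w : Sym2 V → ℝ) {u v : V} (p : G.Walk u v) : ℝ :=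
  (p.edges.map w).sum

/-- The shortest-path distance between two vertices: the minimum length of a path. -/
def spDist (G : SimpleGraph V) (w : Sym2 V → ℝ) (u v : V) : ℝ :=
  sInf {x : ℝ | ∃ p : G.Walk u v, p.IsPath ∧ wlen w p = x}

/-- `(G, w)` is a general metric graph: the weight of every edge equals the
shortest-path distance between its endpoints. -/
def IsMetricGraph (G : SimpleGraph V) (w : Sym2 V → ℝ) : Prop :=
  ∀ u v : V, G.Adj u v → w s(u, v) = spDist G w u v

/-- `e` is a top edge of the closed walk `p`: it lies on `p` and its weight strictly
exceeds the sum of the weights of all the other edges of `p`. -/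
def IsTopEdge {G : SimpleGraph V} (w : Sym2 V → ℝ) {v : V} (p : G.Walk v v)
    (e : Sym2 V) : Prop :=
  e ∈ p.edges ∧ (p.edges.map w).sum - w e < w e

/-- A cycle is unbalanced if it has a top edge. -/
def IsUnbalanced {G : SimpleGraph V} (w : Sym2 V → ℝ) {v : V} (p : G.Walk v v) : Prop :=
  ∃ e, IsTopEdge w p e

/-- `S` is a regular cover of all unbalanced cycles of `G`:
it contains at least one edge of every unbalanced cycle. -/
def RegularCover (G : SimpleGraph V) (w : Sym2 V → ℝ) (S : Set (Sym2 V)) : Prop :=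
  ∀ (v : V) (p : G.Walk v v), p.IsCycle → IsUnbalanced w p → ∃ e ∈ p.edges, e ∈ S

/-- `S` is a non-top cover of all unbalanced cycles of `G`:
it contains at least one non-top edge of every unbalanced cycle. -/
def NonTopCover (G : SimpleGraph V) (w : Sym2 V → ℝ) (S : Set (Sym2 V)) : Prop :=
  ∀ (v : V) (p : G.Walk v v), p.IsCycle → IsUnbalanced w p →
    ∃ e ∈ p.edges, e ∈ S ∧ ¬ IsTopEdge w p e

lemma wlen_nil {G : SimpleGraph V} (w : Sym2 V → ℝ) {u : V} :
    wlen w (SimpleGraph.Walk.nil : G.Walk u u) = 0 := by simp [wlen]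

lemma wlen_cons {G : SimpleGraph V} (w : Sym2 V → ℝ) {u x v : V} (h : G.Adj u x)
    (p : G.Walk x v) : wlen w (SimpleGraph.Walk.cons h p) = w s(u, x) + wlen w p := by
  simp [wlen]

lemma wlen_append {G : SimpleGraph V} (w : Sym2 V → ℝ) {u x v : V} (p : G.Walk u x)
    (q : G.Walk x v) : wlen w (p.append q) = wlen w p + wlen w q := by
  simp [wlen, SimpleGraph.Walk.edges_append]

lemma wlen_nonneg {G : SimpleGraph V} {w : Sym2 V → ℝ} {u v : V} {p : G.Walk u v}
    (h : ∀ e ∈ p.edges, 0 ≤ w e) : 0 ≤ wlen w p := by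
  apply List.sum_nonneg
  intro x hx
  obtain ⟨e, he, rfl⟩ := List.mem_map.mp hx
  exact h e he

lemma wlen_mono {G : SimpleGraph V} {w w' : Sym2 V → ℝ} {u v : V} {p : G.Walk u v}
    (h : ∀ e ∈ p.edges, w' e ≤ w e) : wlen w' p ≤ wlen w p := by
  unfold wlen
  apply List.sum_le_sum
  intro e he
  simpa using h _ (by simpa using he)

lemma spSet_finite (G : SimpleGraph V) [Fintype V] (w : Sym2 V → ℝ) (u v : V) :
    {x : ℝ | ∃ p : G.Walk u v, p.IsPath ∧ wlen w p = x}.Finite := by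
  classical
  have : {x : ℝ | ∃ p : G.Walk u v, p.IsPath ∧ wlen w p = x}
      = (fun q : G.Path u v => wlen w (q : G.Walk u v)) '' Set.univ := by
    ext x
    constructor
    · rintro ⟨p, hp, rfl⟩; exact ⟨⟨p, hp⟩, trivial, rfl⟩
    · rintro ⟨⟨p, hp⟩, -, rfl⟩; exact ⟨p, hp, rfl⟩
  rw [this]
  exact (Set.finite_univ).image _

lemma spSet_nonempty (G : SimpleGraph V) (w : Sym2 V → ℝ) {u v : V} (h : G.Reachable u v) :
    {x : ℝ | ∃ p : G.Walk u v, p.IsPath ∧ wlen w p = x}.Nonempty := by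
  classical
  obtain ⟨q⟩ := h
  exact ⟨_, (q.toPath : G.Walk u v), q.toPath.property, rfl⟩

lemma spDist_le (G : SimpleGraph V) [Fintype V] (w : Sym2 V → ℝ) {u v : V}
    {p : G.Walk u v} (hp : p.IsPath) : spDist G w u v ≤ wlen w p :=
  csInf_le (spSet_finite G w u v).bddBelow ⟨p, hp, rfl⟩

lemma le_spDist (G : SimpleGraph V) (w : Sym2 V → ℝ) {u v : V} (h : G.Reachable u v)
    {c : ℝ} (hc : ∀ p : G.Walk u v, p.IsPath → c ≤ wlen w p) : c ≤ spDist G w u v := by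
  apply le_csInf (spSet_nonempty G w h)
  rintro x ⟨p, hp, rfl⟩
  exact hc p hp

lemma spDist_exists (G : SimpleGraph V) [Fintype V] (w : Sym2 V → ℝ) {u v : V}
    (h : G.Reachable u v) : ∃ p : G.Walk u v, p.IsPath ∧ wlen w p = spDist G w u v :=
  (spSet_nonempty G w h).csInf_mem (spSet_finite G w u v)

lemma wlen_bypass_le {G : SimpleGraph V} [DecidableEq V] {w : Sym2 V → ℝ} {u v : V}
    (p : G.Walk u v) (h : ∀ e ∈ p.edges, 0 ≤ w e) : wlen w p.bypass ≤ wlen w p := by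
  induction p with
  | nil => simp [SimpleGraph.Walk.bypass]
  | @cons a b c ha q ih =>
    have hq : ∀ e ∈ q.edges, 0 ≤ w e := fun e he => h e (by simp [he])
    have hb : ∀ e ∈ q.bypass.edges, 0 ≤ w e := fun e he =>
      hq e (SimpleGraph.Walk.edges_bypass_subset q he)
    rw [SimpleGraph.Walk.bypass]
    split_ifs with hs
    · calc wlen w (q.bypass.dropUntil a hs) ≤ wlen w q.bypass := by
            have := SimpleGraph.Walk.take_spec q.bypass hs
            have h2 : wlen w q.bypass = wlen w (q.bypass.takeUntil a hs)
                + wlen w (q.bypass.dropUntil a hs) := by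
              rw [← wlen_append, this]
            have h3 : 0 ≤ wlen w (q.bypass.takeUntil a hs) :=
              wlen_nonneg (fun e he => hb e (SimpleGraph.Walk.edges_takeUntil_subset _ hs he))
            linarith
        _ ≤ wlen w q := ih hq
        _ ≤ wlen w (SimpleGraph.Walk.cons ha q) := by
            rw [wlen_cons]
            have := h s(a,b) (by simp)
            linarith
    · rw [wlen_cons, wlen_cons]
      have := ih hq
      linarith

/-- Triangle inequality for `spDist` with nonnegative weights. -/
lemma spDist_triangle (G : SimpleGraph V) [Fintype V] (hconn : G.Connected)
    {w : Sym2 V → ℝ} (hw : ∀ e ∈ G.edgeSet, 0 ≤ w e) (u x v : V) :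
    spDist G w u v ≤ spDist G w u x + spDist G w x v := by
  classical
  obtain ⟨p1, hp1, he1⟩ := spDist_exists G w (hconn u x)
  obtain ⟨p2, hp2, he2⟩ := spDist_exists G w (hconn x v)
  have hW : ∀ e ∈ (p1.append p2).edges, 0 ≤ w e := fun e he =>
    hw e ((p1.append p2).edges_subset_edgeSet he)
  calc spDist G w u v ≤ wlen w (p1.append p2).bypass :=
        spDist_le G w ((p1.append p2).bypass_isPath)
    _ ≤ wlen w (p1.append p2) := wlen_bypass_le _ hW
    _ = spDist G w u x + spDist G w x v := by rw [wlen_append, he1, he2]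

lemma spDist_le_edge (G : SimpleGraph V) [Fintype V] (w : Sym2 V → ℝ) {u v : V}
    (h : G.Adj u v) : spDist G w u v ≤ w s(u, v) := by
  have hp : (SimpleGraph.Walk.cons h SimpleGraph.Walk.nil).IsPath := by
    simp [h.ne]
  have := spDist_le G w hp
  simpa [wlen_cons, wlen_nil] using this

lemma spDist_self_nonpos (G : SimpleGraph V) [Fintype V] (w : Sym2 V → ℝ) (u : V) :
    spDist G w u u ≤ 0 := by
  have hp : (SimpleGraph.Walk.nil : G.Walk u u).IsPath := SimpleGraph.Walk.IsPath.nil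
  simpa [wlen_nil] using spDist_le G w hp

/-- Let `S* = { e = (u,v) ∈ E : w(e) > d(u,v) }`.  (i) Replacing the weight of
each edge of `S*` by the shortest-path distance between its endpoints (and
leaving all other weights unchanged) yields a general metric graph; and
(ii) any decrease-only solution `S` must contain `S*`.  Hence `S*` is the unique
minimum-cardinality solution to the decrease-only GMVD problem. -/
theorem stmt6 [Fintype V] (G : SimpleGraph V) (hconn : G.Connected)
    (w : Sym2 V → ℝ) (hw : ∀ e ∈ G.edgeSet, 0 < w e) :
    (∀ w' : Sym2 V → ℝ,
      (∀ u v : V, G.Adj u v →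
        w' s(u, v) = if spDist G w u v < w s(u, v) then spDist G w u v else w s(u, v)) →
      IsMetricGraph G w') ∧
    (∀ (S : Set (Sym2 V)) (w' : Sym2 V → ℝ),
      (∀ e ∈ G.edgeSet, w' e ≤ w e) →
      (∀ e ∈ G.edgeSet, e ∉ S → w' e = w e) →
      IsMetricGraph G w' →
      {e : Sym2 V | ∃ u v : V, G.Adj u v ∧ e = s(u, v) ∧ spDist G w u v < w s(u, v)} ⊆ S) := by
  have hw0 : ∀ e ∈ G.edgeSet, 0 ≤ w e := fun e he => (hw e he).le
  constructor
  · -- part (i)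
    intro w' hw'
    -- on edges, w' equals spDist G w
    have hkey : ∀ u v : V, G.Adj u v → w' s(u, v) = spDist G w u v := by
      intro u v h
      rw [hw' u v h]
      split_ifs with hlt
      · rfl
      · exact le_antisymm (not_lt.mp hlt) (spDist_le_edge G w h)
    -- w' ≤ w on edges
    have hle : ∀ e ∈ G.edgeSet, w' e ≤ w e := by
      intro e he
      induction e using Sym2.ind with
      | _ a b =>
        have h : G.Adj a b := (SimpleGraph.mem_edgeSet G).mp he
        rw [hkey a b h]
        exact spDist_le_edge G w h
    -- spDist G w is a lower bound for the w'-length of every walk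
    have hlb : ∀ (u v : V) (p : G.Walk u v), spDist G w u v ≤ wlen w' p := by
      intro u v p
      induction p with
      | nil => simpa [wlen_nil] using spDist_self_nonpos G w _
      | @cons a b c h q ih =>
        rw [wlen_cons, hkey a b h]
        have := spDist_triangle G hconn hw0 a b c
        linarith
    intro u v h
    rw [hkey u v h]
    apply le_antisymm
    · -- spDist G w u v ≤ spDist G w' u v
      exact le_spDist G w' (hconn u v) (fun p hp => hlb u v p)
    · -- spDist G w' u v ≤ spDist G w u v
      apply le_spDist G w (hconn u v)
      intro p hp
      calc spDist G w' u v ≤ wlen w' p := spDist_le G w' hp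
        _ ≤ wlen w p := wlen_mono (fun e he => hle e (p.edges_subset_edgeSet he))
    -- done
  · -- part (ii)
    intro S w' hle hout hmet e he
    obtain ⟨u, v, hadj, rfl, hlt⟩ := he
    by_contra hS
    have hEdge : s(u, v) ∈ G.edgeSet := hadj
    have hww : w' s(u, v) = w s(u, v) := hout _ hEdge hS
    have hmuv : w' s(u, v) = spDist G w' u v := hmet u v hadj
    -- there is a path of w-length < w s(u,v)
    have : ∃ p : G.Walk u v, p.IsPath ∧ wlen w p < w s(u, v) := by
      by_contra hcon
      push_neg at hcon
      have : w s(u, v) ≤ spDist G w u v :=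
        le_spDist G w (hconn u v) (fun p hp => hcon p hp)
      linarith
    obtain ⟨p, hp, hplt⟩ := this
    have h1 : spDist G w' u v ≤ wlen w' p := spDist_le G w' hp
    have h2 : wlen w' p ≤ wlen w p :=
      wlen_mono (fun e he => hle e (p.edges_subset_edgeSet he))
    linarith [hww ▸ hmuv ▸ (h1.trans h2)]
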